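/- Upper bound for the C_p functional, 1 < p < 2 (Lemma 2.12): Let 1 < p < 2 ≤ n. Then for all ξ, η ∈ ℂⁿ, C_p(ξ,η) ≤ c₃(p) · |η|² / (|ξ| + |ξ−η|)^{2−p}, where c₃(p) := sup_{s²+t²>0} [ (t²+s²+2s+1)^{p/2} − 1 − ps ] / [ (√(t²+s²+2s+1) + 1)^{p−2} (t²+s²) ]; moreover c₃(p) ∈ [p/2^{p−1}, +∞). -/

import Mathlib

/-!
Both sides are homogeneous of degree `p` and depend on `ξ, η` only through `|ξ|`, `|ξ - η|`, `|η|`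
and `Re⟨ξ - η, η⟩`. Scaling `|ξ - η|` to `1`, these are the lengths and inner product of the plane
vectors `(1 + s, t)`, `(1, 0)`, `(s, t)`, and the ratio of the two sides is exactly the quotient
whose supremum defines `c₃(p)`. That supremum is finite: Bernoulli's inequality bounds the quotient
for small `(s, t)` and comparing growth rates bounds it for large `(s, t)`. The point
`(s, t) = (-2, 0)` gives `c₃(p) ≥ p / 2^{p-1}`, which is `≥ 1` by Bernoulli again; this covers the
degenerate case `ξ = η`.
-/

open Real

/-- The functional `C_p(ξ,η) = |ξ|^p - |ξ-η|^p - p|ξ-η|^{p-2} Re⟨ξ-η, η⟩` on `ℂⁿ`. -/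
noncomputable def Cp (n : ℕ) (p : ℝ) (ξ η : EuclideanSpace ℂ (Fin n)) : ℝ :=
  ‖ξ‖ ^ p - ‖ξ - η‖ ^ p - p * ‖ξ - η‖ ^ (p - 2) * (inner ℂ (ξ - η) η : ℂ).re

/-- The constant `c₃(p)`: the supremum over `s² + t² > 0` of
`[(t²+s²+2s+1)^{p/2} - 1 - ps] / [(√(t²+s²+2s+1) + 1)^{p-2}(t²+s²)]`. -/
noncomputable def c3 (p : ℝ) : ℝ :=
  sSup { r : ℝ | ∃ s t : ℝ, 0 < s ^ 2 + t ^ 2 ∧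
    r = ((t ^ 2 + s ^ 2 + 2 * s + 1) ^ (p / 2) - 1 - p * s) /
        ((Real.sqrt (t ^ 2 + s ^ 2 + 2 * s + 1) + 1) ^ (p - 2) * (t ^ 2 + s ^ 2)) }

noncomputable def c3Ratio (p s t : ℝ) : ℝ :=
  ((t ^ 2 + s ^ 2 + 2 * s + 1) ^ (p / 2) - 1 - p * s) /
    ((√(t ^ 2 + s ^ 2 + 2 * s + 1) + 1) ^ (p - 2) * (t ^ 2 + s ^ 2))

lemma rpow_sub_two_mul_sq {x : ℝ} (hx : 0 < x) (p : ℝ) : x ^ (p - 2) * x ^ 2 = x ^ p := by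
  rw [← rpow_natCast, ← rpow_add hx]
  norm_num

/-- With `x = |(1 + s, t)|` and `r = |(s, t)|`. -/
lemma c3Ratio_eq_div {p s t x r : ℝ} (hx : 0 ≤ x) (hxr : x ^ 2 = r ^ 2 + 2 * s + 1)
    (hr : r ^ 2 = s ^ 2 + t ^ 2) :
    c3Ratio p s t = (x ^ p - 1 - p * s) / ((x + 1) ^ (p - 2) * r ^ 2) := by
  have hq : t ^ 2 + s ^ 2 + 2 * s + 1 = x ^ 2 := by linarith
  rw [c3Ratio, hq, rpow_div_two_eq_sqrt _ (sq_nonneg x), sqrt_sq hx, hr, add_comm (t ^ 2)]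

lemma rpow_sub_one_sub_le_twelve {p s x r : ℝ} (hp1 : 1 ≤ p) (hp2 : p ≤ 2) (hx : 0 ≤ x)
    (hr : 0 ≤ r) (hxr : x ^ 2 = r ^ 2 + 2 * s + 1) (hs : |s| ≤ r) :
    x ^ p - 1 - p * s ≤ 12 * ((x + 1) ^ (p - 2) * r ^ 2) := by
  obtain ⟨hs₁, hs₂⟩ := abs_le.mp hs
  have hx_le : x ≤ r + 1 := by nlinarith
  have hden : (r + 2) ^ (p - 2) ≤ (x + 1) ^ (p - 2) :=
    rpow_le_rpow_of_nonpos (by positivity) (by linarith) (by linarith)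
  rcases le_total r 2 with hr₂ | hr₂
  · have hbern : x ^ p ≤ 1 + p / 2 * (r ^ 2 + 2 * s) := by
      have h := rpow_one_add_le_one_add_mul_self (s := r ^ 2 + 2 * s) (by nlinarith)
        (p := p / 2) (by linarith) (by linarith)
      rwa [show 1 + (r ^ 2 + 2 * s) = x ^ 2 by linarith, rpow_div_two_eq_sqrt _ (sq_nonneg x),
        sqrt_sq hx] at h
    have hquarter : 1 / 4 ≤ (r + 2) ^ (p - 2) :=
      calc (1 : ℝ) / 4 = 4 ^ (-1 : ℝ) := by norm_num [rpow_neg_one]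
        _ ≤ 4 ^ (p - 2) := rpow_le_rpow_of_exponent_le (by norm_num) (by linarith)
        _ ≤ (r + 2) ^ (p - 2) := rpow_le_rpow_of_nonpos (by positivity) (by linarith) (by linarith)
    nlinarith [sq_nonneg r]
  · have hxp : x ^ p ≤ (r + 2) ^ p := rpow_le_rpow hx (by linarith) (by linarith)
    have hlin : r + 2 ≤ (r + 2) ^ p := self_le_rpow_of_one_le (by linarith) hp1
    have hsplit : (r + 2) ^ p ≤ 4 * ((r + 2) ^ (p - 2) * r ^ 2) := by
      rw [← rpow_sub_two_mul_sq (by positivity : (0 : ℝ) < r + 2) p]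
      have h := mul_le_mul_of_nonneg_left (by nlinarith : (r + 2) ^ 2 ≤ 4 * r ^ 2)
        (by positivity : 0 ≤ (r + 2) ^ (p - 2))
      linarith
    nlinarith

lemma c3Ratio_le_twelve {p s t : ℝ} (hp1 : 1 ≤ p) (hp2 : p ≤ 2) (hst : 0 < s ^ 2 + t ^ 2) :
    c3Ratio p s t ≤ 12 := by
  have hr : √(s ^ 2 + t ^ 2) ^ 2 = s ^ 2 + t ^ 2 := sq_sqrt hst.le
  have hq : √(t ^ 2 + s ^ 2 + 2 * s + 1) ^ 2 = √(s ^ 2 + t ^ 2) ^ 2 + 2 * s + 1 := by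
    rw [hr, sq_sqrt (by nlinarith [sq_nonneg (s + 1), sq_nonneg t])]
    ring
  have hs : |s| ≤ √(s ^ 2 + t ^ 2) := by
    rw [← sqrt_sq_eq_abs]
    exact sqrt_le_sqrt (by nlinarith)
  rw [c3Ratio_eq_div (sqrt_nonneg _) hq hr, div_le_iff₀ (by positivity)]
  exact rpow_sub_one_sub_le_twelve hp1 hp2 (sqrt_nonneg _) (sqrt_nonneg _) hq hs

lemma c3Ratio_le_c3 {p s t : ℝ} (hp1 : 1 ≤ p) (hp2 : p ≤ 2) (hst : 0 < s ^ 2 + t ^ 2) :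
    c3Ratio p s t ≤ c3 p := by
  refine le_csSup ⟨12, ?_⟩ ⟨s, t, hst, rfl⟩
  rintro _ ⟨s, t, hst, rfl⟩
  exact c3Ratio_le_twelve hp1 hp2 hst

lemma c3Ratio_neg_two_zero (p : ℝ) : c3Ratio p (-2) 0 = p / 2 ^ (p - 1) := by
  have h : (2 : ℝ) ^ (p - 1) = 2 ^ (p - 2) * 2 := by
    rw [← rpow_add_one two_ne_zero]
    ring_nf
  norm_num [c3Ratio, h]
  field_simp
  ring

lemma p_div_two_rpow_le_c3 {p : ℝ} (hp1 : 1 ≤ p) (hp2 : p ≤ 2) : p / 2 ^ (p - 1) ≤ c3 p :=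
  c3Ratio_neg_two_zero p ▸ c3Ratio_le_c3 hp1 hp2 (by norm_num)

lemma two_rpow_sub_one_le {p : ℝ} (hp1 : 1 ≤ p) (hp2 : p ≤ 2) : (2 : ℝ) ^ (p - 1) ≤ p := by
  have h := rpow_one_add_le_one_add_mul_self (s := 1) (by norm_num) (p := p - 1)
    (by linarith) (by linarith)
  rwa [one_add_one_eq_two, mul_one, add_sub_cancel] at h

lemma one_le_c3 {p : ℝ} (hp1 : 1 ≤ p) (hp2 : p ≤ 2) : 1 ≤ c3 p :=
  calc (1 : ℝ) ≤ p / 2 ^ (p - 1) :=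
        (one_le_div (by positivity)).mpr (two_rpow_sub_one_le hp1 hp2)
    _ ≤ c3 p := p_div_two_rpow_le_c3 hp1 hp2

lemma rpow_sub_one_sub_le_c3 {p s x r : ℝ} (hp1 : 1 ≤ p) (hp2 : p ≤ 2) (hx : 0 ≤ x)
    (hr : 0 < r) (hxr : x ^ 2 = r ^ 2 + 2 * s + 1) (hs : |s| ≤ r) :
    x ^ p - 1 - p * s ≤ c3 p * ((x + 1) ^ (p - 2) * r ^ 2) := by
  have hrt : r ^ 2 = s ^ 2 + √(r ^ 2 - s ^ 2) ^ 2 := by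
    rw [sq_sqrt (by nlinarith [sq_abs s, abs_nonneg s])]
    ring
  have h := c3Ratio_le_c3 (t := √(r ^ 2 - s ^ 2)) hp1 hp2 (by rw [← hrt]; positivity)
  rwa [c3Ratio_eq_div hx hxr hrt, div_le_iff₀ (by positivity)] at h

lemma rpow_sub_rpow_sub_le_c3 {p a L m b : ℝ} (hp1 : 1 ≤ p) (hp2 : p ≤ 2) (ha : 0 ≤ a)
    (hL : 0 ≤ L) (hm : 0 ≤ m) (habm : a ^ 2 = L ^ 2 + 2 * b + m ^ 2) (hb : |b| ≤ L * m) :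
    a ^ p - L ^ p - p * L ^ (p - 2) * b ≤ c3 p * m ^ 2 / (a + L) ^ (2 - p) := by
  have hp0 : p ≠ 0 := by positivity
  rcases hm.eq_or_lt with rfl | hm
  · have hb0 : b = 0 := abs_nonpos_iff.mp (by simpa using hb)
    have haL : a = L := (sq_eq_sq₀ ha hL).mp (by simpa [hb0] using habm)
    simp [hb0, haL]
  rw [div_eq_mul_inv, ← rpow_neg (by positivity), neg_sub]
  rcases hL.eq_or_lt with rfl | hL
  · have hb0 : b = 0 := abs_nonpos_iff.mp (by simpa using hb)
    have ham : a = m := (sq_eq_sq₀ ha hm.le).mp (by simpa [hb0] using habm)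
    subst hb0 ham
    rw [zero_rpow hp0, add_zero, mul_zero, sub_zero, sub_zero, mul_assoc, mul_comm (a ^ 2),
      rpow_sub_two_mul_sq hm p]
    exact le_mul_of_one_le_left (by positivity) (one_le_c3 hp1 hp2)
  -- both sides are homogeneous of degree `p` under `(a, L, m, b) ↦ (λa, λL, λm, λ²b)`
  have hs : |b / L ^ 2| ≤ m / L := by
    rw [abs_div, abs_of_pos (by positivity : 0 < L ^ 2), div_le_div_iff₀ (by positivity) hL]
    nlinarith
  have h := rpow_sub_one_sub_le_c3 (x := a / L) hp1 hp2 (by positivity) (by positivity)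
    (by field_simp; linarith) hs
  have hLp : L ^ p = L ^ (p - 2) * L ^ 2 := (rpow_sub_two_mul_sq hL p).symm
  calc a ^ p - L ^ p - p * L ^ (p - 2) * b = L ^ p * ((a / L) ^ p - 1 - p * (b / L ^ 2)) := by
        rw [div_rpow ha hL.le, hLp]
        field_simp
    _ ≤ L ^ p * (c3 p * ((a / L + 1) ^ (p - 2) * (m / L) ^ 2)) :=
        mul_le_mul_of_nonneg_left h (by positivity)
    _ = c3 p * m ^ 2 * (a + L) ^ (p - 2) := by
        rw [div_add_one hL.ne', div_rpow (by positivity) hL.le, hLp]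
        field_simp

theorem Cp_upper_bound_small_p_general {n : ℕ} (p : ℝ) (hp1 : 1 < p) (hp2 : p < 2) :
    (∀ ξ η : EuclideanSpace ℂ (Fin n),
      Cp n p ξ η ≤ c3 p * ‖η‖ ^ 2 / (‖ξ‖ + ‖ξ - η‖) ^ (2 - p))
      ∧ p / (2 : ℝ) ^ (p - 1) ≤ c3 p := by
  refine ⟨fun ξ η => ?_, p_div_two_rpow_le_c3 hp1.le hp2.le⟩
  have hnorm := norm_add_sq (𝕜 := ℂ) (ξ - η) η
  rw [sub_add_cancel] at hnorm
  have hcs : |(inner ℂ (ξ - η) η).re| ≤ ‖ξ - η‖ * ‖η‖ :=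
    (Complex.abs_re_le_norm _).trans (norm_inner_le_norm _ _)
  exact rpow_sub_rpow_sub_le_c3 hp1.le hp2.le (norm_nonneg _) (norm_nonneg _) (norm_nonneg _)
    hnorm hcs

/-- Upper bound for the `C_p` functional for `1 < p < 2 ≤ n`:
`C_p(ξ,η) ≤ c₃(p) |η|² / (|ξ| + |ξ-η|)^{2-p}` for all `ξ, η ∈ ℂⁿ` (with the right-hand side
interpreted as `0` when `ξ = η = 0`), and `c₃(p) ∈ [p/2^{p-1}, ∞)`. -/
theorem Cp_upper_bound_small_p {n : ℕ} (p : ℝ) (hp1 : 1 < p) (hp2 : p < 2) (hn : 2 ≤ n) :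
    (∀ ξ η : EuclideanSpace ℂ (Fin n),
      Cp n p ξ η ≤ c3 p * ‖η‖ ^ 2 / (‖ξ‖ + ‖ξ - η‖) ^ (2 - p))
      ∧ p / (2 : ℝ) ^ (p - 1) ≤ c3 p :=
  Cp_upper_bound_small_p_general p hp1 hp2
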